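/- arXiv:2311.04550 — 11 statements merged into one kernel-verified Lean document; each statement's English description precedes it below -/
import Mathlib

section
/- Under the kernel setup, for all measurable h, r : X → ℝ such that the map x ↦ ∫ (h(x) − y)² ∂(κ x) is μ-integrable, the RcR risk satisfies R(h,r) ≥ ∫ min(c(x), V(x)) ∂μ(x). -/
/-!
Pointwise, accepting at `x` costs `∫ (h x - y)² ∂(κ x)`, which by the bias–variance
decomposition is at least the conditional variance `V x`, while rejecting costs `c x`; either
way the integrand of the risk dominates `min (c x) (V x) ≥ 0`, and integrating gives the bound.
-/

open MeasureTheory ProbabilityTheory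

lemma MeasureTheory.Integrable.ite {α ε : Type*} [MeasurableSpace α] [TopologicalSpace ε]
    [ESeminormedAddMonoid ε] {μ : Measure α} {p : α → Prop} [DecidablePred p] {f g : α → ε}
    (hp : MeasurableSet {x | p x}) (hf : Integrable f μ) (hg : Integrable g μ) :
    Integrable (fun x => if p x then f x else g x) μ := by
  convert Integrable.piecewise hp hf.integrableOn hg.integrableOn with x
  simp only [Set.piecewise, Set.mem_ofPred_eq]

/-- Holds without `MemLp X 2 μ`: otherwise `Var[X; μ] = 0` by convention. -/
lemma ProbabilityTheory.variance_le_integral_sq_const_sub {Ω : Type*} [MeasurableSpace Ω]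
    {μ : Measure Ω} [IsProbabilityMeasure μ] {X : Ω → ℝ} (hX : AEStronglyMeasurable X μ)
    (a : ℝ) : Var[X; μ] ≤ ∫ ω, (a - X ω) ^ 2 ∂μ :=
  variance_const_sub hX a ▸ variance_le_expectation_sq (by fun_prop)

theorem rcr_risk_lower_bound_general {X : Type*} [MeasurableSpace X]
    (μ : Measure X) [IsProbabilityMeasure μ]
    (κ : Kernel X ℝ) [IsMarkovKernel κ]
    (m V : X → ℝ)
    (hm : ∀ x, m x = ∫ y, y ∂(κ x))
    (hV : ∀ x, V x = ∫ y, (y - m x) ^ 2 ∂(κ x))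
    (c : X → ℝ) (hc_nonneg : ∀ x, 0 ≤ c x)
    (hc_int : Integrable c μ)
    (h r : X → ℝ) (hr : Measurable r)
    (hint : Integrable (fun x => ∫ y, (h x - y) ^ 2 ∂(κ x)) μ) :
    ∫ x, min (c x) (V x) ∂μ ≤
      ∫ x, (if 0 < r x then ∫ y, (h x - y) ^ 2 ∂(κ x) else c x) ∂μ := by
  have hV_eq_variance : ∀ x, V x = Var[id; κ x] := fun x => by
    rw [hV, hm, variance_eq_integral aemeasurable_id]
    rfl
  have hV_le_risk : ∀ x, V x ≤ ∫ y, (h x - y) ^ 2 ∂(κ x) := fun x =>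
    hV_eq_variance x ▸ variance_le_integral_sq_const_sub aestronglyMeasurable_id (h x)
  refine integral_mono_of_nonneg (.of_forall fun x => ?_)
    (hint.ite (measurableSet_lt measurable_const hr) hc_int) (.of_forall fun x => ?_)
  · exact le_min (hc_nonneg x) (hV_eq_variance x ▸ variance_nonneg _ _)
  · dsimp only
    split_ifs
    · exact (min_le_right _ _).trans (hV_le_risk x)
    · exact min_le_left _ _

/-- Lower-bound half of Theorem 1 (Bayes optimal solution for regression with cost-based
rejection): under the kernel setup, for all measurable `h, r : X → ℝ` such that
`x ↦ ∫ (h x − y)² ∂(κ x)` is `μ`-integrable, the RcR risk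
`R(h,r) = ∫ [if r x > 0 then ∫ (h x − y)² ∂(κ x) else c x] ∂μ` satisfies
`R(h,r) ≥ ∫ min (c x) (V x) ∂μ`. -/
theorem rcr_risk_lower_bound {X : Type*} [MeasurableSpace X]
    (μ : Measure X) [IsProbabilityMeasure μ]
    (κ : Kernel X ℝ) [IsMarkovKernel κ]
    (hκ : ∀ᵐ x ∂μ, Integrable (fun y => y ^ 2) (κ x))
    (m V : X → ℝ)
    (hm : ∀ x, m x = ∫ y, y ∂(κ x))
    (hV : ∀ x, V x = ∫ y, (y - m x) ^ 2 ∂(κ x))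
    (hVint : Integrable V μ)
    (c : X → ℝ) (hc_meas : Measurable c) (hc_nonneg : ∀ x, 0 ≤ c x)
    (hc_int : Integrable c μ)
    (h r : X → ℝ) (hh : Measurable h) (hr : Measurable r)
    (hint : Integrable (fun x => ∫ y, (h x - y) ^ 2 ∂(κ x)) μ) :
    ∫ x, min (c x) (V x) ∂μ ≤
      ∫ x, (if 0 < r x then ∫ y, (h x - y) ^ 2 ∂(κ x) else c x) ∂μ :=
  rcr_risk_lower_bound_general μ κ m V hm hV c hc_nonneg hc_int h r hr hint
end

section
/- Under the kernel setup, the pair (h⋆, r⋆) given by h⋆(x) = m(x) and r⋆(x) = c(x) − V(x) satisfies R(h⋆, r⋆) = ∫ min(c(x), V(x)) ∂μ(x); hence, combined with the lower bound R(h,r) ≥ ∫ min(c(x), V(x)) ∂μ(x), the pair (h⋆, r⋆) minimizes the RcR risk (the optimal model predicts the conditional mean and rejects exactly when the conditional variance V(x) exceeds the cost c(x)). -/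
open MeasureTheory ProbabilityTheory

/-! The variance is the mean squared error of the best constant predictor, so for every `x`
the accepted loss `∫ (h x - y)² ∂(κ x)` is at least `V x`, which the mean `m x` attains. Hence the
pointwise risk of any pair `(h, r)` is at least `min (c x) (V x)`, and `(m, c - V)` achieves it. -/

lemma variance_le_integral_const_sub_sq {Ω : Type*} [MeasurableSpace Ω] {μ : Measure Ω}
    [IsProbabilityMeasure μ] {Y : Ω → ℝ} (hY : AEStronglyMeasurable Y μ) (a : ℝ) :
    Var[Y; μ] ≤ ∫ ω, (a - Y ω) ^ 2 ∂μ := by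
  rw [← variance_const_sub hY a]
  exact variance_le_expectation_sq (by fun_prop)

lemma integral_sub_integral_sq_le (ν : Measure ℝ) [IsProbabilityMeasure ν] (a : ℝ) :
    ∫ y, (y - ∫ z, z ∂ν) ^ 2 ∂ν ≤ ∫ y, (a - y) ^ 2 ∂ν := by
  calc ∫ y, (y - ∫ z, z ∂ν) ^ 2 ∂ν = Var[id; ν] :=
        (variance_eq_integral measurable_id.aemeasurable).symm
    _ ≤ ∫ y, (a - y) ^ 2 ∂ν := variance_le_integral_const_sub_sq aestronglyMeasurable_id a

lemma ite_sub_pos_eq_min (a b : ℝ) : (if 0 < a - b then b else a) = min a b := by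
  simp only [sub_pos, min_def]
  split_ifs <;> linarith

lemma min_le_ite_of_le {a b e : ℝ} (hbe : b ≤ e) (p : Prop) [Decidable p] :
    min a b ≤ if p then e else a := by
  split_ifs
  exacts [(min_le_right a b).trans hbe, min_le_left a b]

theorem rcr_bayes_optimal_pair_general {X : Type*} [MeasurableSpace X]
    (μ : Measure X)
    (κ : Kernel X ℝ) [IsMarkovKernel κ]
    (m V : X → ℝ)
    (hm : ∀ x, m x = ∫ y, y ∂(κ x))
    (hV : ∀ x, V x = ∫ y, (y - m x) ^ 2 ∂(κ x))
    (hVint : Integrable V μ)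
    (c : X → ℝ)
    (hc_int : Integrable c μ) :
    (∫ x, (if 0 < c x - V x then ∫ y, (m x - y) ^ 2 ∂(κ x) else c x) ∂μ
        = ∫ x, min (c x) (V x) ∂μ) ∧
    (∀ h r : X → ℝ, Measurable h → Measurable r →
      Integrable (fun x => ∫ y, (h x - y) ^ 2 ∂(κ x)) μ →
      ∫ x, (if 0 < c x - V x then ∫ y, (m x - y) ^ 2 ∂(κ x) else c x) ∂μ ≤
        ∫ x, (if 0 < r x then ∫ y, (h x - y) ^ 2 ∂(κ x) else c x) ∂μ) := by
  have hV_le (x : X) (a : ℝ) : V x ≤ ∫ y, (a - y) ^ 2 ∂(κ x) := by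
    rw [hV, hm]
    exact integral_sub_integral_sq_le (κ x) a
  have hV_eq (x : X) : ∫ y, (m x - y) ^ 2 ∂(κ x) = V x := by
    rw [hV]
    congr 1 with y
    ring
  have h_opt : ∫ x, (if 0 < c x - V x then ∫ y, (m x - y) ^ 2 ∂(κ x) else c x) ∂μ
      = ∫ x, min (c x) (V x) ∂μ := by
    simp_rw [hV_eq, ite_sub_pos_eq_min]
  refine ⟨h_opt, fun h r _ hr hrisk => ?_⟩
  have h_int : Integrable (fun x => if 0 < r x then ∫ y, (h x - y) ^ 2 ∂(κ x) else c x) μ :=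
    Integrable.piecewise (s := {x | 0 < r x}) (measurableSet_lt measurable_const hr)
      hrisk.integrableOn hc_int.integrableOn
  rw [h_opt]
  exact integral_mono (hc_int.inf hVint) h_int fun x => min_le_ite_of_le (hV_le x (h x)) _

/-- Attainment half of Theorem 1 (Bayes optimal solution for regression with cost-based
rejection): under the kernel setup, the pair `(h⋆, r⋆)` given by `h⋆ x = m x` and
`r⋆ x = c x − V x` satisfies `R(h⋆, r⋆) = ∫ min (c x) (V x) ∂μ`; hence, combined with the
lower bound, `(h⋆, r⋆)` minimizes the RcR risk. -/
theorem rcr_bayes_optimal_pair {X : Type*} [MeasurableSpace X]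
    (μ : Measure X) [IsProbabilityMeasure μ]
    (κ : Kernel X ℝ) [IsMarkovKernel κ]
    (hκ : ∀ᵐ x ∂μ, Integrable (fun y => y ^ 2) (κ x))
    (m V : X → ℝ)
    (hm : ∀ x, m x = ∫ y, y ∂(κ x))
    (hV : ∀ x, V x = ∫ y, (y - m x) ^ 2 ∂(κ x))
    (hVint : Integrable V μ)
    (c : X → ℝ) (hc_meas : Measurable c) (hc_nonneg : ∀ x, 0 ≤ c x)
    (hc_int : Integrable c μ) :
    (∫ x, (if 0 < c x - V x then ∫ y, (m x - y) ^ 2 ∂(κ x) else c x) ∂μ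
        = ∫ x, min (c x) (V x) ∂μ) ∧
    (∀ h r : X → ℝ, Measurable h → Measurable r →
      Integrable (fun x => ∫ y, (h x - y) ^ 2 ∂(κ x)) μ →
      ∫ x, (if 0 < c x - V x then ∫ y, (m x - y) ^ 2 ∂(κ x) else c x) ∂μ ≤
        ∫ x, (if 0 < r x then ∫ y, (h x - y) ^ 2 ∂(κ x) else c x) ∂μ) :=
  rcr_bayes_optimal_pair_general μ κ m V hm hV hVint c hc_int
end

section
/- Under the kernel setup with weights, suppose w(x) > 0 for μ-almost every x. Then for every measurable h : X → ℝ with all relevant integrands μ-integrable, R^ψ(h) ≥ R^ψ(m); moreover, if R^ψ(h) = R^ψ(m) then h(x) = m(x) for μ-almost every x. In other words, for any fixed rejector the unique (up to μ-null sets) minimizer of the surrogate risk is the Bayes optimal regressor h⋆ = m (regressor-consistency). -/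
open MeasureTheory ProbabilityTheory

/-- Bias-variance decomposition for a probability measure with finite second moment. -/
lemma sq_decomp (ν : Measure ℝ) [IsProbabilityMeasure ν]
    (h2 : Integrable (fun y => y ^ 2) ν) (a : ℝ) :
    ∫ y, (a - y) ^ 2 ∂ν = (∫ y, ((∫ z, z ∂ν) - y) ^ 2 ∂ν) + (a - ∫ z, z ∂ν) ^ 2 := by
  set μ0 := ∫ z, z ∂ν with hμ0
  have h1 : Integrable (fun y => y) ν := by
    refine (h2.add (integrable_const 1)).mono' measurable_id.aestronglyMeasurable
      (Filter.Eventually.of_forall fun y => ?_)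
    simp only [Pi.add_apply]
    have : ‖y‖ = |y| := rfl
    rw [this]
    nlinarith [sq_nonneg (|y| - 1), sq_abs y]
  have hsq : ∀ b : ℝ, Integrable (fun y => (b - y) ^ 2) ν := by
    intro b
    have : Integrable (fun y => b ^ 2 - 2 * b * y + y ^ 2) ν :=
      ((integrable_const (b ^ 2)).sub (h1.const_mul (2 * b))).add h2
    exact this.congr (Filter.Eventually.of_forall fun y => by ring)
  have hcross : Integrable (fun y => (2 * (a - μ0)) * (μ0 - y)) ν :=
    (((integrable_const μ0).sub h1).const_mul _)
  have key : (fun y => (a - y) ^ 2) =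
      (fun y => ((μ0 - y) ^ 2 + (2 * (a - μ0)) * (μ0 - y)) + (a - μ0) ^ 2) := by
    funext y; ring
  have hzero : ∫ y, (μ0 - y) ∂ν = 0 := by
    rw [integral_sub (integrable_const μ0) h1, integral_const]
    simp [hμ0]
  have hsum : Integrable (fun y => (μ0 - y) ^ 2 + (2 * (a - μ0)) * (μ0 - y)) ν :=
    (hsq μ0).add hcross
  rw [key, integral_add hsum (integrable_const _),
    integral_add (hsq μ0) hcross, integral_const_mul, hzero, integral_const]
  simp

/-- Theorem 2 (regressor-consistency): under the kernel setup with weights, if `w x > 0` for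
`μ`-almost every `x`, then for every measurable `h` with all relevant integrands integrable,
`R^ψ(h) ≥ R^ψ(m)`; moreover, if `R^ψ(h) = R^ψ(m)` then `h = m` `μ`-almost everywhere.  Thus, for
any fixed rejector, the unique (up to `μ`-null sets) minimizer of the surrogate risk is the
Bayes optimal regressor `h⋆ = m`. -/
theorem regressor_consistency {X : Type*} [MeasurableSpace X]
    (μ : Measure X) [IsProbabilityMeasure μ]
    (κ : Kernel X ℝ) [IsMarkovKernel κ]
    (hκ : ∀ᵐ x ∂μ, Integrable (fun y => y ^ 2) (κ x))
    (m V : X → ℝ)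
    (hm : ∀ x, m x = ∫ y, y ∂(κ x))
    (hV : ∀ x, V x = ∫ y, (y - m x) ^ 2 ∂(κ x))
    (hVint : Integrable V μ)
    (c : X → ℝ) (hc_meas : Measurable c) (hc_nonneg : ∀ x, 0 ≤ c x)
    (hc_int : Integrable c μ)
    (w v : X → ℝ) (hw_meas : Measurable w) (hv_meas : Measurable v)
    (hw_nonneg : ∀ x, 0 ≤ w x) (hv_nonneg : ∀ x, 0 ≤ v x)
    (hw_pos : ∀ᵐ x ∂μ, 0 < w x)
    (h : X → ℝ) (hh : Measurable h)
    (hinth : Integrable (fun x => (∫ y, (h x - y) ^ 2 ∂(κ x)) * w x + c x * v x) μ)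
    (hintm : Integrable (fun x => (∫ y, (m x - y) ^ 2 ∂(κ x)) * w x + c x * v x) μ) :
    (∫ x, ((∫ y, (m x - y) ^ 2 ∂(κ x)) * w x + c x * v x) ∂μ ≤
      ∫ x, ((∫ y, (h x - y) ^ 2 ∂(κ x)) * w x + c x * v x) ∂μ) ∧
    ((∫ x, ((∫ y, (h x - y) ^ 2 ∂(κ x)) * w x + c x * v x) ∂μ =
        ∫ x, ((∫ y, (m x - y) ^ 2 ∂(κ x)) * w x + c x * v x) ∂μ) →
      ∀ᵐ x ∂μ, h x = m x) := by
  set A : X → ℝ := fun x => ∫ y, (h x - y) ^ 2 ∂(κ x) with hA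
  set B : X → ℝ := fun x => ∫ y, (m x - y) ^ 2 ∂(κ x) with hB
  set f : X → ℝ := fun x => A x * w x - B x * w x with hf
  have hfint : Integrable f μ := by
    have := hinth.sub hintm
    exact this.congr (Filter.Eventually.of_forall fun x => by simp only [Pi.sub_apply, hf]; ring)
  have hfeq : ∀ᵐ x ∂μ, f x = (h x - m x) ^ 2 * w x := by
    filter_upwards [hκ] with x hx
    have hd := sq_decomp (κ x) hx (h x)
    rw [← hm x] at hd
    have hAB : A x = B x + (h x - m x) ^ 2 := hd
    simp only [hf, hAB]; ring
  have hfnn : ∀ᵐ x ∂μ, 0 ≤ f x := by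
    filter_upwards [hfeq] with x hx
    rw [hx]; exact mul_nonneg (sq_nonneg _) (hw_nonneg x)
  have hsub : ∫ x, f x ∂μ =
      (∫ x, (A x * w x + c x * v x) ∂μ) - ∫ x, (B x * w x + c x * v x) ∂μ := by
    rw [← integral_sub hinth hintm]
    exact integral_congr_ae (Filter.Eventually.of_forall fun x => by simp only [Pi.sub_apply, hf]; ring)
  have hle : 0 ≤ ∫ x, f x ∂μ := integral_nonneg_of_ae hfnn
  constructor
  · linarith [hsub ▸ hle]
  · intro heq
    have hfz : ∫ x, f x ∂μ = 0 := by rw [hsub, heq]; ring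
    have : f =ᵐ[μ] 0 := (integral_eq_zero_iff_of_nonneg_ae hfnn hfint).mp hfz
    filter_upwards [this, hfeq, hw_pos] with x h0 he hwp
    have : (h x - m x) ^ 2 * w x = 0 := by rw [← he]; exact h0
    have := (mul_eq_zero.mp this).resolve_right (ne_of_gt hwp)
    have := pow_eq_zero_iff (n := 2) (by norm_num) |>.mp this
    linarith
end

section
/- Under the kernel setup with weights, suppose only that w(x) ≥ 0 for all x. Then for every measurable h : X → ℝ with all relevant integrands μ-integrable, R^ψ(h) ≥ R^ψ(m); moreover, if R^ψ(h) = R^ψ(m) then h(x) = m(x) for μ-almost every x in the set {x : w(x) > 0}. That is, under the relaxed (non-negativity) condition, regressor-consistency still holds on the set of accepted instances. -/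
open MeasureTheory ProbabilityTheory

lemma sq_dist_integral (ν : Measure ℝ) [IsProbabilityMeasure ν]
    (h2 : Integrable (fun y => y ^ 2) ν) (a : ℝ) :
    ∫ y, (a - y) ^ 2 ∂ν = (∫ y, y ^ 2 ∂ν) - 2 * a * (∫ y, y ∂ν) + a ^ 2 := by
  have hy : Integrable (fun y : ℝ => y) ν := by
    refine Integrable.mono' ((integrable_const (1:ℝ)).add h2) measurable_id.aestronglyMeasurable
      (Filter.Eventually.of_forall fun y => ?_)
    have : |y| ≤ 1 + y ^ 2 := by nlinarith [sq_nonneg (|y| - 1), abs_nonneg y, sq_abs y]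
    simpa [Real.norm_eq_abs] using this
  have hfun : (fun y : ℝ => (a - y) ^ 2) = fun y => (y ^ 2 - (2 * a) * y) + a ^ 2 := by
    funext y; ring
  have hy2 : Integrable (fun y : ℝ => 2 * a * y) ν := hy.const_mul _
  have hsub : Integrable (fun y : ℝ => y ^ 2 - 2 * a * y) ν := h2.sub hy2
  rw [hfun, integral_add hsub (integrable_const _), integral_sub h2 hy2,
    MeasureTheory.integral_const_mul, integral_const]
  simp

/-- Theorem 3 (relaxed regressor-consistency for correctly accepted instances): under the
kernel setup with weights, supposing only `w x ≥ 0` for all `x`, for every measurable `h` with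
all relevant integrands integrable, `R^ψ(h) ≥ R^ψ(m)`; moreover, if `R^ψ(h) = R^ψ(m)` then
`h x = m x` for `μ`-almost every `x` in the set `{x : w x > 0}` (the accepted instances). -/
theorem regressor_consistency_relaxed {X : Type*} [MeasurableSpace X]
    (μ : Measure X) [IsProbabilityMeasure μ]
    (κ : Kernel X ℝ) [IsMarkovKernel κ]
    (hκ : ∀ᵐ x ∂μ, Integrable (fun y => y ^ 2) (κ x))
    (m V : X → ℝ)
    (hm : ∀ x, m x = ∫ y, y ∂(κ x))
    (hV : ∀ x, V x = ∫ y, (y - m x) ^ 2 ∂(κ x))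
    (hVint : Integrable V μ)
    (c : X → ℝ) (hc_meas : Measurable c) (hc_nonneg : ∀ x, 0 ≤ c x)
    (hc_int : Integrable c μ)
    (w v : X → ℝ) (hw_meas : Measurable w) (hv_meas : Measurable v)
    (hw_nonneg : ∀ x, 0 ≤ w x) (hv_nonneg : ∀ x, 0 ≤ v x)
    (h : X → ℝ) (hh : Measurable h)
    (hinth : Integrable (fun x => (∫ y, (h x - y) ^ 2 ∂(κ x)) * w x + c x * v x) μ)
    (hintm : Integrable (fun x => (∫ y, (m x - y) ^ 2 ∂(κ x)) * w x + c x * v x) μ) :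
    (∫ x, ((∫ y, (m x - y) ^ 2 ∂(κ x)) * w x + c x * v x) ∂μ ≤
      ∫ x, ((∫ y, (h x - y) ^ 2 ∂(κ x)) * w x + c x * v x) ∂μ) ∧
    ((∫ x, ((∫ y, (h x - y) ^ 2 ∂(κ x)) * w x + c x * v x) ∂μ =
        ∫ x, ((∫ y, (m x - y) ^ 2 ∂(κ x)) * w x + c x * v x) ∂μ) →
      ∀ᵐ x ∂μ, 0 < w x → h x = m x) := by
  -- pointwise key identity
  have key : ∀ᵐ x ∂μ,
      ((∫ y, (h x - y) ^ 2 ∂(κ x)) * w x + c x * v x) -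
        ((∫ y, (m x - y) ^ 2 ∂(κ x)) * w x + c x * v x)
      = (h x - m x) ^ 2 * w x := by
    filter_upwards [hκ] with x hx
    have e1 := sq_dist_integral (κ x) hx (h x)
    have e2 := sq_dist_integral (κ x) hx (m x)
    rw [e1, e2, ← hm x]
    ring
  have hnonneg : ∀ᵐ x ∂μ,
      ((∫ y, (m x - y) ^ 2 ∂(κ x)) * w x + c x * v x) ≤
        ((∫ y, (h x - y) ^ 2 ∂(κ x)) * w x + c x * v x) := by
    filter_upwards [key] with x hxk
    nlinarith [sq_nonneg (h x - m x), hw_nonneg x, mul_nonneg (sq_nonneg (h x - m x)) (hw_nonneg x)]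
  refine ⟨integral_mono_ae hintm hinth hnonneg, fun heq => ?_⟩
  have hzero : ∫ x, (((∫ y, (h x - y) ^ 2 ∂(κ x)) * w x + c x * v x) -
      ((∫ y, (m x - y) ^ 2 ∂(κ x)) * w x + c x * v x)) ∂μ = 0 := by
    rw [integral_sub hinth hintm, heq, sub_self]
  have hae : (fun x => ((∫ y, (h x - y) ^ 2 ∂(κ x)) * w x + c x * v x) -
      ((∫ y, (m x - y) ^ 2 ∂(κ x)) * w x + c x * v x)) =ᵐ[μ] 0 := by
    refine (integral_eq_zero_iff_of_nonneg_ae ?_ (hinth.sub hintm)).mp hzero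
    filter_upwards [hnonneg] with x hx
    simpa using sub_nonneg.mpr hx
  filter_upwards [hae, key] with x hx0 hxk hwx
  have : (h x - m x) ^ 2 * w x = 0 := by rw [← hxk]; simpa using hx0
  have := (mul_eq_zero.mp this).resolve_right (ne_of_gt hwx)
  have := pow_eq_zero_iff (n := 2) (by norm_num) |>.mp this
  linarith
end

section
/- Let D ≥ 0 and c ≥ 0. For the hinge-loss conditional surrogate risk g(α) = D·max(0, 1 + α) + c·max(0, 1 − α), the infimum of g over α ∈ ℝ equals 2·min(D, c) and is attained; moreover, if D ≠ c, then every global minimizer α of g satisfies sign(α) = sign(c − D) (in particular, if 0 < D < c the unique minimizer is α = 1, and if 0 < c < D the unique minimizer is α = −1). -/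
/-- Hinge-loss instantiation of Theorem 4 (rejector-calibration).  For `D ≥ 0`, `c ≥ 0` and
`g α = D·max(0, 1 + α) + c·max(0, 1 − α)`, the infimum of `g` over `ℝ` equals `2·min(D, c)`
and is attained; moreover, if `D ≠ c`, every global minimizer `α` of `g` satisfies
`sign α = sign (c − D)` (in particular, if `0 < D < c` the unique minimizer is `α = 1`, and
if `0 < c < D` the unique minimizer is `α = −1`). -/
theorem hinge_rejector_calibration (D c : ℝ) (hD : 0 ≤ D) (hc : 0 ≤ c) :
    (∀ α : ℝ, 2 * min D c ≤ D * max 0 (1 + α) + c * max 0 (1 - α)) ∧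
    (∃ α : ℝ, D * max 0 (1 + α) + c * max 0 (1 - α) = 2 * min D c) ∧
    (D ≠ c → ∀ α : ℝ,
      (∀ β : ℝ, D * max 0 (1 + α) + c * max 0 (1 - α) ≤
        D * max 0 (1 + β) + c * max 0 (1 - β)) →
      Real.sign α = Real.sign (c - D)) ∧
    (0 < D → D < c → ∀ α : ℝ,
      (∀ β : ℝ, D * max 0 (1 + α) + c * max 0 (1 - α) ≤
        D * max 0 (1 + β) + c * max 0 (1 - β)) →
      α = 1) ∧
    (0 < c → c < D → ∀ α : ℝ,
      (∀ β : ℝ, D * max 0 (1 + α) + c * max 0 (1 - α) ≤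
        D * max 0 (1 + β) + c * max 0 (1 - β)) →
      α = -1) := by
  have key : ∀ α : ℝ, 2 * min D c ≤ D * max 0 (1 + α) + c * max 0 (1 - α) := by
    intro α
    have hm : min D c ≤ D := min_le_left _ _
    have hm2 : min D c ≤ c := min_le_right _ _
    rcases le_total α (-1) with h | h
    · rw [max_eq_left (by linarith), max_eq_right (by linarith)]
      nlinarith
    rcases le_total 1 α with h2 | h2
    · rw [max_eq_right (by linarith), max_eq_left (by linarith)]
      nlinarith
    · rw [max_eq_right (by linarith), max_eq_right (by linarith)]
      rcases le_total D c with hdc | hdc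
      · rw [min_eq_left hdc]; nlinarith
      · rw [min_eq_right hdc]; nlinarith
  have hex : ∃ α : ℝ, D * max 0 (1 + α) + c * max 0 (1 - α) = 2 * min D c := by
    rcases le_total D c with hdc | hdc
    · refine ⟨1, ?_⟩
      rw [min_eq_left hdc]; norm_num; ring
    · refine ⟨-1, ?_⟩
      rw [min_eq_right hdc]; norm_num; ring
  have heqmin : ∀ α : ℝ,
      (∀ β : ℝ, D * max 0 (1 + α) + c * max 0 (1 - α) ≤
        D * max 0 (1 + β) + c * max 0 (1 - β)) →
      D * max 0 (1 + α) + c * max 0 (1 - α) = 2 * min D c := by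
    intro α hmin
    obtain ⟨β, hβ⟩ := hex
    exact le_antisymm (le_of_le_of_eq (hmin β) hβ) (key α)
  refine ⟨key, hex, ?_, ?_, ?_⟩
  · intro hne α hmin
    have heq := heqmin α hmin
    rcases lt_or_gt_of_ne hne with hdc | hdc
    · -- D < c, show α > 0
      rw [min_eq_left hdc.le] at heq
      have hα : 0 < α := by
        by_contra h
        push_neg at h
        rcases le_total α (-1) with h1 | h1
        · rw [max_eq_left (by linarith), max_eq_right (by linarith)] at heq
          nlinarith
        · rw [max_eq_right (by linarith), max_eq_right (by linarith)] at heq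
          nlinarith
      rw [Real.sign_of_pos hα, Real.sign_of_pos (by linarith : (0:ℝ) < c - D)]
    · -- c < D, show α < 0
      rw [min_eq_right hdc.le] at heq
      have hα : α < 0 := by
        by_contra h
        push_neg at h
        rcases le_total 1 α with h1 | h1
        · rw [max_eq_right (by linarith), max_eq_left (by linarith)] at heq
          nlinarith
        · rw [max_eq_right (by linarith), max_eq_right (by linarith)] at heq
          nlinarith
      rw [Real.sign_of_neg hα, Real.sign_of_neg (by linarith : c - D < 0)]
  · intro hDpos hdc α hmin
    have heq := heqmin α hmin
    rw [min_eq_left hdc.le] at heq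
    rcases le_total α (-1) with h1 | h1
    · rw [max_eq_left (by linarith), max_eq_right (by linarith)] at heq
      nlinarith
    rcases le_total 1 α with h2 | h2
    · rw [max_eq_right (by linarith), max_eq_left (by linarith)] at heq
      nlinarith
    · rw [max_eq_right (by linarith), max_eq_right (by linarith)] at heq
      nlinarith
  · intro hcpos hdc α hmin
    have heq := heqmin α hmin
    rw [min_eq_right hdc.le] at heq
    rcases le_total α (-1) with h1 | h1
    · rw [max_eq_left (by linarith), max_eq_right (by linarith)] at heq
      nlinarith
    rcases le_total 1 α with h2 | h2
    · rw [max_eq_right (by linarith), max_eq_left (by linarith)] at heq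
      nlinarith
    · rw [max_eq_right (by linarith), max_eq_right (by linarith)] at heq
      nlinarith
end

section
/- Let D ≥ 0 and c ≥ 0, and let σ(t) = 1/(1 + exp(−t)) be the logistic sigmoid. Then inf over α ∈ ℝ of D·σ(α) + c·σ(−α) equals min(D, c); moreover, if D ≠ c, the infimum is not attained at any α ∈ ℝ. -/
lemma sigmoid_aux (α : ℝ) :
    0 < 1 / (1 + Real.exp (-α)) ∧
    1 / (1 + Real.exp (-α)) + 1 / (1 + Real.exp α) = 1 ∧
    1 / (1 + Real.exp α) < Real.exp (-α) := by
  have h1 : 0 < Real.exp (-α) := Real.exp_pos _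
  have h2 : 0 < Real.exp α := Real.exp_pos _
  have hm : Real.exp (-α) * Real.exp α = 1 := by
    rw [← Real.exp_add]; simp
  refine ⟨by positivity, ?_, ?_⟩
  · field_simp
    nlinarith
  · rw [div_lt_iff₀ (by positivity)]
    nlinarith

/-- Sigmoid instantiation of the optimal conditional surrogate value (Theorem 4 analysis).
For `D ≥ 0`, `c ≥ 0` and the logistic sigmoid `σ t = 1/(1 + exp (−t))`, the infimum over
`α ∈ ℝ` of `D·σ(α) + c·σ(−α)` equals `min D c`; moreover, if `D ≠ c`, the infimum is not
attained at any `α ∈ ℝ`. -/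
theorem sigmoid_conditional_surrogate_inf (D c : ℝ) (hD : 0 ≤ D) (hc : 0 ≤ c)
    (σ : ℝ → ℝ) (hσ : ∀ t, σ t = 1 / (1 + Real.exp (-t))) :
    IsGLB (Set.range fun α : ℝ => D * σ α + c * σ (-α)) (min D c) ∧
    (D ≠ c → ∀ α : ℝ, D * σ α + c * σ (-α) ≠ min D c) := by
  have key : ∀ α : ℝ, 0 < σ α ∧ σ α + σ (-α) = 1 ∧ σ (-α) < Real.exp (-α) := by
    intro α
    have := sigmoid_aux α
    rw [hσ α, hσ (-α)]
    simpa using this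
  have pos : ∀ α : ℝ, 0 < σ α := fun α => (key α).1
  have sum : ∀ α : ℝ, σ α + σ (-α) = 1 := fun α => (key α).2.1
  have slt : ∀ α : ℝ, σ (-α) < Real.exp (-α) := fun α => (key α).2.2
  constructor
  · constructor
    · rintro x ⟨α, rfl⟩
      have hs := pos α
      have ht := pos (-α)
      have hsum := sum α
      show min D c ≤ D * σ α + c * σ (-α)
      rcases le_total D c with hdc | hdc
      · rw [min_eq_left hdc]; nlinarith
      · rw [min_eq_right hdc]; nlinarith
    · intro b hb
      by_contra hcon
      push_neg at hcon
      rcases le_total D c with hdc | hdc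
      · rw [min_eq_left hdc] at hcon
        rcases eq_or_lt_of_le hdc with rfl | hlt
        · have h0 : b ≤ D * σ 0 + D * σ (-0) := hb ⟨0, rfl⟩
          have hsum := sum 0
          nlinarith [hsum, h0]
        · set x := (b - D) / (c - D) with hx
          have hx0 : 0 < x := div_pos (by linarith) (by linarith)
          set α := -Real.log x with hα
          have hexp : Real.exp (-α) = x := by
            rw [hα, neg_neg, Real.exp_log hx0]
          have hsum := sum α
          have hbound : b ≤ D * σ α + c * σ (-α) := hb ⟨α, rfl⟩
          have hσlt : σ (-α) < x := hexp ▸ slt α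
          have heq : D * σ α + c * σ (-α) = D + (c - D) * σ (-α) := by nlinarith
          have hcd : (c - D) * σ (-α) < (c - D) * x :=
            mul_lt_mul_of_pos_left hσlt (by linarith)
          have hxval : (c - D) * x = b - D := by
            rw [hx, mul_comm, div_mul_cancel₀ _ (by linarith : c - D ≠ 0)]
          linarith
      · rw [min_eq_right hdc] at hcon
        rcases eq_or_lt_of_le hdc with rfl | hlt
        · have h0 : b ≤ c * σ 0 + c * σ (-0) := hb ⟨0, rfl⟩
          have hsum := sum 0
          nlinarith [hsum, h0]
        · set x := (b - c) / (D - c) with hx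
          have hx0 : 0 < x := div_pos (by linarith) (by linarith)
          set α := Real.log x with hα
          have hexp : Real.exp α = x := by rw [hα, Real.exp_log hx0]
          have hsum := sum α
          have hbound : b ≤ D * σ α + c * σ (-α) := hb ⟨α, rfl⟩
          have hlt2 : σ α < Real.exp α := by simpa using slt (-α)
          have hσlt : σ α < x := hexp ▸ hlt2
          have heq : D * σ α + c * σ (-α) = c + (D - c) * σ α := by nlinarith
          have hcd : (D - c) * σ α < (D - c) * x :=
            mul_lt_mul_of_pos_left hσlt (by linarith)
          have hxval : (D - c) * x = b - c := by
            rw [hx, mul_comm, div_mul_cancel₀ _ (by linarith : D - c ≠ 0)]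
          linarith
  · intro hne α
    have hs := pos α
    have ht := pos (-α)
    have hsum := sum α
    rcases lt_or_gt_of_ne hne with h | h
    · rw [min_eq_left h.le]; nlinarith
    · rw [min_eq_right h.le]; nlinarith
end

section
/- Let 0 ≤ D ≤ D̃ and c ≥ 0. Then for every α ∈ ℝ: (if α > 0 then D̃ else c) − min(D, c) ≤ (D̃·max(0, 1 + α) + c·max(0, 1 − α)) − 2·min(D, c). That is, for the hinge loss the pointwise regret of the target RcR loss (where D is the conditional variance, D̃ the conditional expected squared error of the regressor, and c the rejection cost) is bounded by the pointwise excess surrogate risk, with ξ(u) = |u|. -/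
/-- Pointwise (conditional-risk) form of Theorem 5 (regret transfer bound) for the hinge
loss: for `0 ≤ D ≤ Dt` (conditional variance `D`, conditional expected squared error `Dt`)
and cost `c ≥ 0`, for every rejector output `α`, the pointwise regret of the target RcR loss
is bounded by the pointwise excess surrogate risk, with `ξ(u) = |u|`:
`(if α > 0 then Dt else c) − min D c ≤ (Dt·max(0, 1 + α) + c·max(0, 1 − α)) − 2·min D c`. -/
theorem hinge_pointwise_regret_transfer (D Dt c : ℝ) (hD : 0 ≤ D) (hDDt : D ≤ Dt)
    (hc : 0 ≤ c) :
    ∀ α : ℝ, (if 0 < α then Dt else c) - min D c ≤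
      (Dt * max 0 (1 + α) + c * max 0 (1 - α)) - 2 * min D c := by
  intro α
  have hmD : min D c ≤ D := min_le_left _ _
  have hmc : min D c ≤ c := min_le_right _ _
  have hDt : 0 ≤ Dt := le_trans hD hDDt
  rcases le_or_gt (1 + α) 0 with h1 | h1 <;>
  rcases le_or_gt (1 - α) 0 with h2 | h2
  · linarith
  · rw [max_eq_left h1, max_eq_right h2.le]
    split_ifs with hα
    · linarith
    · nlinarith [mul_nonneg hc (sub_nonneg.2 (not_lt.1 hα))]
  · rw [max_eq_right h1.le, max_eq_left h2]
    split_ifs with hα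
    · nlinarith
    · linarith
  · rw [max_eq_right h1.le, max_eq_right h2.le]
    split_ifs with hα
    · nlinarith [mul_nonneg (sub_nonneg.2 hmc) hα.le, mul_nonneg (sub_nonneg.2 (le_trans hmD hDDt)) hα.le]
    · nlinarith [mul_nonneg (sub_nonneg.2 hmc) (neg_nonneg.2 (not_lt.1 hα)), mul_nonneg (sub_nonneg.2 (le_trans hmD hDDt)) (neg_nonneg.2 (not_lt.1 hα))]
end

section
/- Let 0 < D < c. Then for every α ≤ 0: D·log(1 + exp(α)) + c·log(1 + exp(−α)) − (D·log(1 + c/D) + c·log(1 + D/c)) ≥ (c − D)² / (2·(D + c)). That is, for the logistic loss, whenever the rejector output has the wrong sign (rejects although D < c), the excess conditional surrogate risk is at least (D + c)/2 times the squared normalized margin ((c − D)/(D + c))². -/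
/-!
Write `g α = D log (1 + exp α) + c log (1 + exp (-α))`. For `α ≤ 0` one has
`g α ≥ g 0 = (D + c) log 2`, because `(1 + x)(1 + x⁻¹) ≥ 4` and `1 + x⁻¹ ≥ 2` for `0 < x ≤ 1`
while `D ≤ c`. The gap between `g 0` and the minimum of `g` is `D + c` times the Kullback–Leibler
divergence of `(D, c) / (D + c)` from the uniform distribution on two points, so Pinsker's
inequality bounds it below by `(c - D)² / (2 (D + c))`.
-/

open Real Set

namespace Real

lemma two_mul_le_log_one_add_sub_log_one_sub {u : ℝ} (h₀ : 0 ≤ u) (h₁ : u < 1) :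
    2 * u ≤ log (1 + u) - log (1 - u) := by
  have h := sum_range_le_log_div h₀ h₁ 1
  rw [log_div (by linarith) (by linarith)] at h
  norm_num at h
  linarith

lemma hasDerivAt_one_add_mul_log_add_one_sub_mul_log {y : ℝ} (h₀ : -1 < y) (h₁ : y < 1) :
    HasDerivAt (fun y => (1 + y) * log (1 + y) + (1 - y) * log (1 - y))
      (log (1 + y) - log (1 - y)) y := by
  have hp := (hasDerivAt_mul_log (x := 1 + y) (by linarith)).comp y
    ((hasDerivAt_id y).const_add 1)
  have hm := (hasDerivAt_mul_log (x := 1 - y) (by linarith)).comp y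
    ((hasDerivAt_id y).const_sub 1)
  exact (hp.add hm).congr_deriv (by ring)

/-- Pinsker's inequality for the distribution `((1 + u) / 2, (1 - u) / 2)` against the uniform one. -/
lemma sq_le_one_add_mul_log_add_one_sub_mul_log_of_nonneg {u : ℝ} (h₀ : 0 ≤ u) (h₁ : u < 1) :
    u ^ 2 ≤ (1 + u) * log (1 + u) + (1 - u) * log (1 - u) := by
  set G : ℝ → ℝ := fun y => (1 + y) * log (1 + y) + (1 - y) * log (1 - y) - y ^ 2
  have hG : ∀ y ∈ Icc 0 u, HasDerivAt G (log (1 + y) - log (1 - y) - 2 * y) y := fun y hy =>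
    (hasDerivAt_one_add_mul_log_add_one_sub_mul_log (by linarith [hy.1]) (by linarith [hy.2])).sub
      (by simpa using hasDerivAt_pow 2 y)
  have hmono : MonotoneOn G (Icc 0 u) :=
    monotoneOn_of_hasDerivWithinAt_nonneg (convex_Icc 0 u)
      (fun y hy => (hG y hy).continuousAt.continuousWithinAt)
      (fun y hy => (hG y (interior_subset hy)).hasDerivWithinAt)
      (fun y hy => by
        rw [interior_Icc] at hy
        linarith [two_mul_le_log_one_add_sub_log_one_sub hy.1.le (hy.2.trans h₁)])
  have := hmono ⟨le_rfl, h₀⟩ ⟨h₀, le_rfl⟩ h₀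
  simp only [G] at this
  norm_num at this
  linarith

lemma sq_le_one_add_mul_log_add_one_sub_mul_log {u : ℝ} (h : |u| < 1) :
    u ^ 2 ≤ (1 + u) * log (1 + u) + (1 - u) * log (1 - u) := by
  rcases le_total 0 u with hu | hu
  · exact sq_le_one_add_mul_log_add_one_sub_mul_log_of_nonneg hu (lt_of_abs_lt h)
  · have := sq_le_one_add_mul_log_add_one_sub_mul_log_of_nonneg (neg_nonneg.mpr hu)
      (by linarith [neg_abs_le u])
    rw [neg_sq, ← sub_eq_add_neg, sub_neg_eq_add] at this
    linarith

end Real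

lemma four_le_one_add_mul_one_add_inv {x : ℝ} (hx : 0 < x) : 4 ≤ (1 + x) * (1 + x⁻¹) := by
  have h : (1 + x) * (1 + x⁻¹) = 4 + (x - 1) ^ 2 / x := by field_simp; ring
  rw [h]
  linarith [div_nonneg (sq_nonneg (x - 1)) hx.le]

lemma add_mul_log_two_le_mul_log_one_add_add_mul_log_one_add_inv {D c x : ℝ} (hD : 0 ≤ D)
    (hDc : D ≤ c) (hx₀ : 0 < x) (hx₁ : x ≤ 1) :
    (D + c) * log 2 ≤ D * log (1 + x) + c * log (1 + x⁻¹) := by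
  have hprod : 2 * log 2 ≤ log (1 + x) + log (1 + x⁻¹) := by
    rw [← log_mul (by positivity) (by positivity), ← log_rpow two_pos]
    exact log_le_log (by positivity) (by norm_num; exact four_le_one_add_mul_one_add_inv hx₀)
  have hinv : log 2 ≤ log (1 + x⁻¹) :=
    log_le_log two_pos (by linarith [one_le_inv_iff₀.mpr ⟨hx₀, hx₁⟩])
  linarith [mul_le_mul_of_nonneg_left hprod hD, mul_le_mul_of_nonneg_left hinv (sub_nonneg.mpr hDc)]

lemma add_mul_log_two_sub_eq_mul_log_add_mul_log {D c : ℝ} (hD : 0 < D) (hc : 0 < c) :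
    (D + c) * log 2 - (D * log (1 + c / D) + c * log (1 + D / c)) =
      D * log (2 * D / (D + c)) + c * log (2 * c / (D + c)) := by
  have hDc : 0 < D + c := by linarith
  have h₁ : log (1 + c / D) = log (D + c) - log D := by
    rw [← log_div hDc.ne' hD.ne', add_div, div_self hD.ne']
  have h₂ : log (1 + D / c) = log (D + c) - log c := by
    rw [← log_div hDc.ne' hc.ne', add_div, div_self hc.ne', add_comm]
  rw [h₁, h₂, log_div (by positivity) hDc.ne', log_div (by positivity) hDc.ne',
    log_mul two_ne_zero hD.ne', log_mul two_ne_zero hc.ne']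
  ring

lemma sq_sub_div_le_mul_log_two_mul_div_add_mul_log_two_mul_div {D c : ℝ} (hD : 0 < D)
    (hc : 0 < c) :
    (c - D) ^ 2 / (2 * (D + c)) ≤ D * log (2 * D / (D + c)) + c * log (2 * c / (D + c)) := by
  have hDc : 0 < D + c := by linarith
  have hu : |(c - D) / (D + c)| < 1 := by
    rw [abs_div, abs_of_pos hDc, div_lt_one hDc, abs_lt]
    constructor <;> linarith
  have hplus : 1 + (c - D) / (D + c) = 2 * c / (D + c) := by field_simp; ring
  have hminus : 1 - (c - D) / (D + c) = 2 * D / (D + c) := by field_simp; ring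
  calc (c - D) ^ 2 / (2 * (D + c)) = (D + c) / 2 * ((c - D) / (D + c)) ^ 2 := by
        field_simp
    _ ≤ (D + c) / 2 * ((1 + (c - D) / (D + c)) * log (1 + (c - D) / (D + c)) +
          (1 - (c - D) / (D + c)) * log (1 - (c - D) / (D + c))) := by
        gcongr
        exact sq_le_one_add_mul_log_add_one_sub_mul_log hu
    _ = D * log (2 * D / (D + c)) + c * log (2 * c / (D + c)) := by
        rw [hplus, hminus]
        field_simp
        ring

/-- Pinsker-type lower bound for the logistic loss (key step of Theorem 5): for `0 < D < c`,
whenever the rejector output `α ≤ 0` has the wrong sign, the excess conditional surrogate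
risk is at least `(c − D)² / (2(D + c))`. -/
theorem logistic_wrong_sign_excess_risk (D c : ℝ) (hD : 0 < D) (hDc : D < c) :
    ∀ α : ℝ, α ≤ 0 →
      (c - D) ^ 2 / (2 * (D + c)) ≤
        D * Real.log (1 + Real.exp α) + c * Real.log (1 + Real.exp (-α)) -
          (D * Real.log (1 + c / D) + c * Real.log (1 + D / c)) := by
  intro α hα
  have hc : 0 < c := hD.trans hDc
  have hzero := add_mul_log_two_le_mul_log_one_add_add_mul_log_one_add_inv hD.le hDc.le
    (exp_pos α) (exp_le_one_iff.mpr hα)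
  have hpinsker := sq_sub_div_le_mul_log_two_mul_div_add_mul_log_two_mul_div hD hc
  rw [← exp_neg] at hzero
  linarith [add_mul_log_two_sub_eq_mul_log_add_mul_log hD hc]
end

section
/- Let 0 < D ≤ D̃ ≤ c. Then c·log(1 + (D̃ − D)/(D + c)) + D̃·log(1 + c/D̃) − D·log(1 + c/D) ≥ (D̃ − D)/2. -/
/-!
Writing `φ(x) = x log x`, the left-hand side is the increment `g Dt - g D` of
`g x = φ (x + c) - φ x`, whose derivative `log (1 + c / x)` decreases in `x`. By the mean value
theorem the increment is at least `(Dt - D) log (1 + c / Dt)`, and `c / Dt ≥ 1` makes this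
logarithm at least `log 2 > 1 / 2`.
-/

open Real Set

lemma hasDerivAt_mul_log_add_sub_mul_log {x c : ℝ} (hx : x ≠ 0) (hxc : x + c ≠ 0) :
    HasDerivAt (fun x ↦ (x + c) * log (x + c) - x * log x) (log (x + c) - log x) x := by
  simpa using ((hasDerivAt_mul_log hxc).comp_add_const x c).fun_sub (hasDerivAt_mul_log hx)

lemma sub_mul_log_one_add_div_le_mul_log_add_sub_mul_log {a b c : ℝ} (ha : 0 < a) (hab : a ≤ b)
    (hc : 0 ≤ c) :
    (b - a) * log (1 + c / b) ≤
      ((b + c) * log (b + c) - b * log b) - ((a + c) * log (a + c) - a * log a) := by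
  have hb : 0 < b := ha.trans_le hab
  have hcont : Continuous fun x ↦ (x + c) * log (x + c) - x * log x := by fun_prop
  have hderiv : ∀ x ∈ Ioo a b,
      HasDerivAt (fun x ↦ (x + c) * log (x + c) - x * log x) (log (x + c) - log x) x :=
    fun x hx ↦ hasDerivAt_mul_log_add_sub_mul_log (ha.trans hx.1).ne' (by linarith [hx.1])
  rw [mul_comm]
  refine (convex_Icc a b).mul_sub_le_image_sub_of_le_deriv hcont.continuousOn
    (fun x hx ↦ ?_) (fun x hx ↦ ?_) a (left_mem_Icc.2 hab) b (right_mem_Icc.2 hab) hab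
  · rw [interior_Icc] at hx
    exact (hderiv x hx).differentiableAt.differentiableWithinAt
  · rw [interior_Icc] at hx
    have hx0 : 0 < x := ha.trans hx.1
    rw [(hderiv x hx).deriv, ← log_div (by linarith) hx0.ne', add_div, div_self hx0.ne']
    gcongr
    exact hx.2.le

lemma mul_log_one_add_div_sub_eq {a b c : ℝ} (ha : a ≠ 0) (hb : b ≠ 0) (hac : a + c ≠ 0)
    (hbc : b + c ≠ 0) :
    c * log (1 + (b - a) / (a + c)) + b * log (1 + c / b) - a * log (1 + c / a) =
      ((b + c) * log (b + c) - b * log b) - ((a + c) * log (a + c) - a * log a) := by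
  have e1 : 1 + (b - a) / (a + c) = (b + c) / (a + c) := by field_simp; ring
  have e2 : 1 + c / b = (b + c) / b := by field_simp
  have e3 : 1 + c / a = (a + c) / a := by field_simp
  rw [e1, e2, e3, log_div hbc hac, log_div hbc hb, log_div hac ha]
  ring

/-- Chain of estimates in the proof of Theorem 5 (regret transfer bound) for the logistic
loss, case `0 < D ≤ Dt ≤ c`: the excess conditional surrogate risk is at least half the
pointwise target regret `Dt − D`:
`c·log(1 + (Dt − D)/(D + c)) + Dt·log(1 + c/Dt) − D·log(1 + c/D) ≥ (Dt − D)/2`. -/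
theorem logistic_regret_transfer_case (D Dt c : ℝ) (hD : 0 < D) (hDDt : D ≤ Dt)
    (hDtc : Dt ≤ c) :
    (Dt - D) / 2 ≤
      c * Real.log (1 + (Dt - D) / (D + c)) + Dt * Real.log (1 + c / Dt) -
        D * Real.log (1 + c / D) := by
  have hDt : 0 < Dt := hD.trans_le hDDt
  have hc : 0 < c := hDt.trans_le hDtc
  have hlog : 1 / 2 ≤ log (1 + c / Dt) := by
    have htwo : (2 : ℝ) ≤ 1 + c / Dt := by
      have := (one_le_div hDt).2 hDtc
      linarith
    linarith [log_two_gt_d9, log_le_log two_pos htwo]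
  rw [mul_log_one_add_div_sub_eq hD.ne' hDt.ne' (by positivity) (by positivity)]
  calc (Dt - D) / 2 = (Dt - D) * (1 / 2) := by ring
    _ ≤ (Dt - D) * log (1 + c / Dt) := by gcongr
    _ ≤ _ := sub_mul_log_one_add_div_le_mul_log_add_sub_mul_log hD hDDt hc.le
end

section
/- Let 0 ≤ D < c, and set α* = (c − D)/(D + c). Then for every α ≤ 0: D·(1 + α)² + c·(1 − α)² − (D·(1 + α*)² + c·(1 − α*)²) ≥ (c − D)²/(D + c). That is, for the square loss, whenever the rejector output has the wrong sign (rejects although D < c), the excess conditional surrogate risk is at least (c − D)²/(D + c). -/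
/-! The conditional surrogate risk `g α = D (1 + α)² + c (1 - α)²` is a quadratic with leading
coefficient `D + c`, so `g α - g α* = (D + c) (α - α*)²`. When `D < c` the minimizer `α*` is
positive, hence every `α ≤ 0` lies at distance at least `α*` from it, and
`(D + c) α*² = (c - D)² / (D + c)`. -/

def squareSurrogateRisk (D c α : ℝ) : ℝ :=
  D * (1 + α) ^ 2 + c * (1 - α) ^ 2

theorem squareSurrogateRisk_sub_risk_minimizer {D c : ℝ} (h : D + c ≠ 0) (α : ℝ) :
    squareSurrogateRisk D c α - squareSurrogateRisk D c ((c - D) / (D + c)) =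
      (D + c) * (α - (c - D) / (D + c)) ^ 2 := by
  unfold squareSurrogateRisk
  field_simp
  ring

theorem sq_le_sq_sub_of_nonpos_of_nonneg {α β : ℝ} (hα : α ≤ 0) (hβ : 0 ≤ β) :
    β ^ 2 ≤ (α - β) ^ 2 := by
  rw [sub_sq_comm]
  exact pow_le_pow_left₀ hβ (by linarith) 2

/-- Excess-risk lower bound for the square loss (key step of Theorem 5): for `0 ≤ D < c` and
`α* = (c − D)/(D + c)`, whenever the rejector output `α ≤ 0` has the wrong sign, the excess
conditional surrogate risk is at least `(c − D)²/(D + c)`. -/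
theorem square_wrong_sign_excess_risk (D c : ℝ) (hD : 0 ≤ D) (hDc : D < c) :
    ∀ α : ℝ, α ≤ 0 →
      (c - D) ^ 2 / (D + c) ≤
        D * (1 + α) ^ 2 + c * (1 - α) ^ 2 -
          (D * (1 + (c - D) / (D + c)) ^ 2 + c * (1 - (c - D) / (D + c)) ^ 2) := by
  intro α hα
  have hpos : 0 < D + c := by linarith
  have hmin_nonneg : 0 ≤ (c - D) / (D + c) := div_nonneg (by linarith) hpos.le
  calc (c - D) ^ 2 / (D + c) = (D + c) * ((c - D) / (D + c)) ^ 2 := by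
        field_simp
    _ ≤ (D + c) * (α - (c - D) / (D + c)) ^ 2 :=
        mul_le_mul_of_nonneg_left (sq_le_sq_sub_of_nonpos_of_nonneg hα hmin_nonneg) hpos.le
    _ = squareSurrogateRisk D c α - squareSurrogateRisk D c ((c - D) / (D + c)) :=
        (squareSurrogateRisk_sub_risk_minimizer hpos.ne' α).symm
end

section
/- Let 0 ≤ D < c and let σ(t) = 1/(1 + exp(−t)) be the logistic sigmoid. Then for every α ≤ 0: D·σ(α) + c·σ(−α) − D ≥ (c − D)/2. That is, for the sigmoid weighting, whenever the rejector output has the wrong sign (α ≤ 0 although D < c), the conditional surrogate risk exceeds its infimum min(D, c) = D by at least (c − D)/2. -/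
/-- Excess-risk lower bound for the sigmoid weighting (step in the proof of Theorem 5): for
`0 ≤ D < c` and the logistic sigmoid `σ t = 1/(1 + exp (−t))`, whenever the rejector output
`α ≤ 0` has the wrong sign, the conditional surrogate risk `D·σ(α) + c·σ(−α)` exceeds its
infimum `min D c = D` by at least `(c − D)/2`. -/
theorem sigmoid_wrong_sign_excess_risk (D c : ℝ) (hD : 0 ≤ D) (hDc : D < c)
    (σ : ℝ → ℝ) (hσ : ∀ t, σ t = 1 / (1 + Real.exp (-t))) :
    ∀ α : ℝ, α ≤ 0 → (c - D) / 2 ≤ D * σ α + c * σ (-α) - D := by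
  intro α hα
  rw [hσ, hσ, neg_neg]
  have h1 : 0 < 1 + Real.exp (-α) := by positivity
  have h2 : 0 < 1 + Real.exp α := by positivity
  have hm : 1 ≤ Real.exp (-α) := Real.one_le_exp (by linarith)
  have hm2 : Real.exp α ≤ 1 := Real.exp_le_one_iff.mpr hα
  have key : Real.exp α * Real.exp (-α) = 1 := by
    rw [← Real.exp_add]; simp
  rw [div_le_iff₀ (by norm_num : (0:ℝ) < 2), sub_mul, le_sub_iff_add_le]
  have e1 : D * (1 / (1 + Real.exp (-α))) = D / (1 + Real.exp (-α)) := by ring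
  have e2 : c * (1 / (1 + Real.exp α)) = c / (1 + Real.exp α) := by ring
  rw [e1, e2, div_add_div _ _ (ne_of_gt h1) (ne_of_gt h2), div_mul_eq_mul_div, le_div_iff₀ (by positivity)]
  nlinarith [mul_pos h1 h2, Real.exp_pos α, Real.exp_pos (-α), mul_le_mul_of_nonneg_left hm2 hD]
end
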